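/- The estimated cost E(p,u) = (1-p) * Σ_{j=0}^{k-1} p^j (Σ_{i≤j} u i) + p^k (Σ_{i≤k} u i) is monotonically nondecreasing in p on [0,1], when all costs u i ≥ 0. -/

import Mathlib

open Finset

noncomputable def estCost (k : ℕ) (p : ℝ) (u : Fin (k+1) → ℝ) : ℝ :=
  (1 - p) * ∑ j ∈ Finset.range k, p ^ j *
      ∑ i ∈ Finset.univ.filter (fun i : Fin (k+1) => (i : ℕ) ≤ j), u i
  + p ^ k * ∑ i, u i

/-! Exchanging the two sums, the coefficient of `u i` in `estCost k p u` is
`(1 - p) (pⁱ + ⋯ + pᵏ⁻¹) + pᵏ = pⁱ`, so `estCost k p u = ∑ᵢ pⁱ u i` is a polynomial in `p` with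
nonnegative coefficients. -/

lemma one_sub_mul_sum_Ico_pow_add_pow {R : Type*} [CommRing R] (x : R) {m n : ℕ} (hmn : m ≤ n) :
    (1 - x) * ∑ j ∈ Ico m n, x ^ j + x ^ n = x ^ m := by
  rw [mul_comm, geom_sum_Ico_mul_neg x hmn, sub_add_cancel]

lemma estCost_eq_sum_pow_mul (k : ℕ) (p : ℝ) (u : Fin (k+1) → ℝ) :
    estCost k p u = ∑ i : Fin (k+1), p ^ (i : ℕ) * u i := by
  have weight (i : Fin (k+1)) :
      (1 - p) * ∑ j ∈ range k, (if (i : ℕ) ≤ j then p ^ j else 0) + p ^ k = p ^ (i : ℕ) := by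
    rw [← sum_filter, range_eq_Ico, Ico_filter_le, Nat.zero_max,
      one_sub_mul_sum_Ico_pow_add_pow p (Nat.lt_succ_iff.mp i.is_lt)]
  unfold estCost
  simp_rw [← weight, add_mul, sum_add_distrib, mul_assoc, ← mul_sum]
  congr 2
  simp_rw [sum_filter, mul_sum, sum_mul, ite_mul, zero_mul, mul_ite, mul_zero]
  exact sum_comm

theorem stmt2 (k : ℕ) (u : Fin (k+1) → ℝ) (hu : ∀ i, 0 ≤ u i) :
    MonotoneOn (fun p => estCost k p u) (Set.Icc (0:ℝ) 1) := by
  intro p hp q _ hpq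
  simp only [estCost_eq_sum_pow_mul]
  gcongr with i
  · exact hu i
  · exact hp.1
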